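/- A (2n+1)-dimensional N(κ)-contact metric manifold M (n>1) satisfies C̃(ξ,X)·S = 0 for all vector fields X if and only if either M is an N(1−1/n)-contact metric manifold (i.e. κ = 1−1/n) or M is an Einstein manifold with S(X,Y) = 2nκ g(X,Y). -/
import Mathlib


/-!
Algebraic (pointwise) model of a `(2n+1)`-dimensional `N(κ)`-contact metric
manifold.  Vector fields are modelled by a real module `V`; the Riemannian
metric `g`, the Riemann curvature tensor `R`, the Ricci tensor `S`, the Ricci
operator `Qop`, the scalar curvature `r` and the contact structure
`(φ, ξ, η)` are data, subject to the standard identities of an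
`N(κ)`-contact metric manifold:  the defining contact metric identities,
the `κ`-nullity condition `R(X,Y)ξ = κ(η(Y)X − η(X)Y)`, together with the
well-known consequences `S(X,ξ) = 2nκ η(X)` and `r = 2n(2n−2+κ)`.
-/

noncomputable section

structure NkContact (V : Type) [AddCommGroup V] [Module ℝ V] (n : ℕ) : Type where
  g : V →ₗ[ℝ] V →ₗ[ℝ] ℝ
  R : V →ₗ[ℝ] V →ₗ[ℝ] V →ₗ[ℝ] V
  S : V →ₗ[ℝ] V →ₗ[ℝ] ℝ
  Qop : V →ₗ[ℝ] V
  r : ℝ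
  phi : V →ₗ[ℝ] V
  xi : V
  eta : V →ₗ[ℝ] ℝ
  kappa : ℝ
  hdim : Module.finrank ℝ V = 2 * n + 1
  g_symm : ∀ X Y, g X Y = g Y X
  g_nondeg : ∀ X, (∀ Y, g X Y = 0) → X = 0
  S_symm : ∀ X Y, S X Y = S Y X
  eta_eq : ∀ X, eta X = g X xi
  eta_xi : eta xi = 1
  phi_phi : ∀ X, phi (phi X) = -X + eta X • xi
  phi_xi : phi xi = 0
  eta_phi : ∀ X, eta (phi X) = 0
  g_phi_phi : ∀ X Y, g (phi X) (phi Y) = g X Y - eta X * eta Y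
  Q_def : ∀ X Y, g (Qop X) Y = S X Y
  R_skew : ∀ X Y Z, R X Y Z = - R Y X Z
  R_g_skew : ∀ X Y Z W, g (R X Y Z) W = - g (R X Y W) Z
  R_bianchi : ∀ X Y Z, R X Y Z + R Y Z X + R Z X Y = 0
  nullity : ∀ X Y, R X Y xi = kappa • (eta Y • X - eta X • Y)
  ricci_xi : ∀ X, S X xi = (2 * (n : ℝ) * kappa) * eta X
  scalar_curv : r = 2 * (n : ℝ) * (2 * (n : ℝ) - 2 + kappa)

namespace NkContact

variable {V : Type} [AddCommGroup V] [Module ℝ V] {n : ℕ}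

/-- `(X ∧ Y)Z = g(Y,Z)X − g(X,Z)Y`. -/
def wedge (M : NkContact V n) (X Y Z : V) : V :=
  M.g Y Z • X - M.g X Z • Y

/-- The concircular curvature tensor
`C̃(X,Y)Z = R(X,Y)Z − (r/(m(m−1)))(g(Y,Z)X − g(X,Z)Y)`, `m = 2n+1`. -/
def conc (M : NkContact V n) (X Y Z : V) : V :=
  M.R X Y Z - (M.r / ((2 * (n : ℝ) + 1) * (2 * (n : ℝ)))) • M.wedge X Y Z

/-- The Weyl conformal curvature tensor
`C(X,Y) = R(X,Y) − (1/(m−2)){(X∧QY) + (QX∧Y) − (r/(m−1))(X∧Y)}`, `m = 2n+1`. -/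
def weyl (M : NkContact V n) (X Y Z : V) : V :=
  M.R X Y Z - (1 / (2 * (n : ℝ) - 1)) •
    ((M.g (M.Qop Y) Z • X - M.g X Z • M.Qop Y)
      + (M.g Y Z • M.Qop X - M.g (M.Qop X) Z • Y)
      - (M.r / (2 * (n : ℝ))) • M.wedge X Y Z)

end NkContact

/-- The action of a linear operator `D` (such as `C̃(U,V)` or `R(U,V)`) on a
`(1,3)`-tensor `T` as a derivation:
`(D·T)(X,Y)Z = D(T(X,Y)Z) − T(DX,Y)Z − T(X,DY)Z − T(X,Y)(DZ)`. -/
def derAct {V : Type} [AddCommGroup V] [Module ℝ V]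
    (D : V → V) (T : V → V → V → V) (X Y Z : V) : V :=
  D (T X Y Z) - T (D X) Y Z - T X (D Y) Z - T X Y (D Z)

section Aux

variable {V : Type} [AddCommGroup V] [Module ℝ V] {n : ℕ}

lemma g_R_skew1 (M : NkContact V n) (X Y Z W : V) :
    M.g (M.R X Y Z) W = - M.g (M.R Y X Z) W := by
  rw [M.R_skew]; simp

lemma g_R_bianchi (M : NkContact V n) (X Y Z W : V) :
    M.g (M.R X Y Z) W + M.g (M.R Y Z X) W + M.g (M.R Z X Y) W = 0 := by
  have h : M.g (M.R X Y Z + M.R Y Z X + M.R Z X Y) W = M.g 0 W := by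
    rw [M.R_bianchi]
  simpa [map_add, LinearMap.add_apply] using h

lemma pair_symm (M : NkContact V n) (X Y Z W : V) :
    M.g (M.R X Y Z) W = M.g (M.R Z W X) Y := by
  have b1 := g_R_bianchi M Y Z X W
  have b2 := g_R_bianchi M Z X W Y
  have b3 := g_R_bianchi M X W Y Z
  have b4 := g_R_bianchi M W Y Z X
  have s1 := M.R_g_skew Y Z X W
  have s2 := M.R_g_skew Z X Y W
  have s3 := M.R_g_skew X W Y Z
  have s4 := M.R_g_skew W Y X Z
  have s5 := g_R_skew1 M Y X W Z
  have s6 := M.R_g_skew X Y W Z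
  have s7 := M.R_g_skew Z W Y X
  have s8 := g_R_skew1 M W Z X Y
  linarith

lemma g_R_xi (M : NkContact V n) (X Z W : V) :
    M.g (M.R M.xi X Z) W
      = M.kappa * (M.eta W * M.g X Z - M.eta Z * M.g X W) := by
  rw [pair_symm M M.xi X Z W, M.nullity]
  simp only [smul_sub, map_sub, map_smul, LinearMap.sub_apply, LinearMap.smul_apply,
    smul_eq_mul]
  rw [M.g_symm Z X, M.g_symm W X]
  ring

lemma g_conc_xi (M : NkContact V n) (X Z W : V) :
    M.g (M.conc M.xi X Z) W
      = (M.kappa - M.r / ((2 * (n : ℝ) + 1) * (2 * (n : ℝ))))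
          * (M.eta W * M.g X Z - M.eta Z * M.g X W) := by
  unfold NkContact.conc NkContact.wedge
  simp only [map_sub, map_smul, LinearMap.sub_apply, LinearMap.smul_apply, smul_eq_mul]
  rw [g_R_xi]
  rw [show M.g M.xi W = M.eta W from by rw [M.eta_eq, M.g_symm],
      show M.g M.xi Z = M.eta Z from by rw [M.eta_eq, M.g_symm]]
  ring

lemma S_conc (M : NkContact V n) (X Z W : V) :
    M.S (M.conc M.xi X Z) W
      = (M.kappa - M.r / ((2 * (n : ℝ) + 1) * (2 * (n : ℝ))))
          * ((2 * (n : ℝ) * M.kappa) * M.eta W * M.g X Z - M.eta Z * M.S W X) := by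
  rw [M.S_symm, ← M.Q_def, M.g_symm, g_conc_xi]
  rw [show M.eta (M.Qop W) = 2 * (n : ℝ) * M.kappa * M.eta W from by
        rw [M.eta_eq, M.Q_def, M.ricci_xi],
      show M.g X (M.Qop W) = M.S W X from (M.g_symm X (M.Qop W)).trans (M.Q_def W X)]

lemma kappa_sub_c (M : NkContact V n) (hn0 : (n : ℝ) ≠ 0) :
    M.kappa - M.r / ((2 * (n : ℝ) + 1) * (2 * (n : ℝ)))
      = (2 * (n : ℝ) / (2 * (n : ℝ) + 1)) * (M.kappa - (1 - 1 / (n : ℝ))) := by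
  have h1 : (2 * (n : ℝ) + 1) ≠ 0 := by positivity
  rw [M.scalar_curv]
  field_simp
  ring

end Aux

/-- A `(2n+1)`-dimensional `N(κ)`-contact metric manifold (`n > 1`)
satisfies `C̃(ξ,X)·S = 0` for all vector fields `X` iff either `κ = 1 − 1/n`
(i.e. it is an `N(1−1/n)`-contact metric manifold) or it is an Einstein manifold
with `S(X,Y) = 2nκ g(X,Y)`. -/
theorem conc_xi_dot_S_eq_zero_iff {V : Type} [AddCommGroup V] [Module ℝ V]
    (n : ℕ) (hn : 1 < n) (M : NkContact V n) :
    (∀ X Z W : V, -(M.S (M.conc M.xi X Z) W) - M.S Z (M.conc M.xi X W) = 0)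
      ↔ (M.kappa = 1 - 1 / (n : ℝ)
          ∨ ∀ X Y : V, M.S X Y = (2 * (n : ℝ) * M.kappa) * M.g X Y) := by
  have hn0 : (n : ℝ) ≠ 0 := Nat.cast_ne_zero.mpr (by omega)
  constructor
  · intro H
    by_cases hk : M.kappa = 1 - 1 / (n : ℝ)
    · exact Or.inl hk
    · right
      have hne : M.kappa - M.r / ((2 * (n : ℝ) + 1) * (2 * (n : ℝ))) ≠ 0 := by
        rw [kappa_sub_c M hn0]
        apply mul_ne_zero
        · have h1 : (2 * (n : ℝ) + 1) ≠ 0 := by positivity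
          have h2 : (2 * (n : ℝ)) ≠ 0 := by positivity
          exact div_ne_zero h2 h1
        · exact sub_ne_zero_of_ne hk
      have key : ∀ X Z : V,
          (M.kappa - M.r / ((2 * (n : ℝ) + 1) * (2 * (n : ℝ))))
            * (M.S Z X - (2 * (n : ℝ) * M.kappa) * M.g X Z) = 0 := by
        intro X Z
        have h := H X Z M.xi
        rw [S_conc M X Z M.xi, M.S_symm Z (M.conc M.xi X M.xi), S_conc M X M.xi Z,
            M.eta_xi, M.S_symm M.xi X, M.ricci_xi X,
            show M.g X M.xi = M.eta X from (M.eta_eq X).symm] at h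
        linear_combination h
      intro X Y
      have h2 := key Y X
      rcases mul_eq_zero.mp h2 with h3 | h3
      · exact absurd h3 hne
      · have := sub_eq_zero.mp h3
        rw [this, M.g_symm]
  · intro h X Z W
    rw [S_conc M X Z W, M.S_symm Z (M.conc M.xi X W), S_conc M X W Z]
    rcases h with hk | hE
    · have h0 : M.kappa - M.r / ((2 * (n : ℝ) + 1) * (2 * (n : ℝ))) = 0 := by
        rw [kappa_sub_c M hn0, hk]
        ring
      rw [h0]
      ring
    · rw [hE W X, hE Z X, M.g_symm W X, M.g_symm Z X]
      ring
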